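/- Let θ > 0 and α > −1 be real numbers and N ≥ 1 an integer. Define the N×N matrix G̃ = (g̃_{ij})_{i,j=1}^N by g̃_{ij} = Γ(1+α+N+θ(j−1)) / (α+N+θ(j−1)−(i−1)). Then G̃ is invertible and its inverse is the matrix C̃ = (c̃_{kl})_{k,l=1}^N with entries c̃_{kl} = θ · [1/(Γ(1+α+θ(k−1)) (k−1)! (N−k)!)] · [((α+N−(l−1))/θ)_N / ((l−1)!(N−l)!)] · (−1)^{N+k+l+1} / (α+N+θ(k−1)−(l−1)); equivalently, Σ_{l=1}^N c̃_{kl} g̃_{lj} = δ_{kj} for all k,j. -/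
import Mathlib

open Finset Polynomial

private lemma gamma_prod (z : ℝ) (hz : 0 < z) (n : ℕ) :
    Real.Gamma (z + n) = Real.Gamma z * ∏ i ∈ range n, (z + i) := by
  induction n with
  | zero => simp
  | succ n ih =>
    have hzn : z + n ≠ 0 := by positivity
    have : z + (n + 1 : ℕ) = (z + n) + 1 := by push_cast; ring
    rw [this, Real.Gamma_add_one hzn, ih, prod_range_succ]; ring

private lemma asc_eval (n : ℕ) (x : ℝ) :
    (ascPochhammer ℝ n).eval x = ∏ i ∈ range n, (x + i) := by
  induction n with
  | zero => simp
  | succ n ih =>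
    rw [ascPochhammer_succ_right, prod_range_succ, eval_mul, ih, eval_add, eval_X,
      eval_natCast]

private lemma prod_lower (l : ℕ) : ∏ i ∈ range l, ((l : ℝ) - i) = l.factorial := by
  rw [← prod_range_reflect]
  have : ∀ i ∈ range l, ((l : ℝ) - (l - 1 - i : ℕ)) = (i + 1 : ℕ) := by
    intro i hi
    rw [mem_range] at hi
    have : (l - 1 - i : ℕ) = l - 1 - i := rfl
    push_cast [Nat.cast_sub (by omega : i ≤ l - 1), Nat.cast_sub (by omega : 1 ≤ l)]
    ring
  rw [prod_congr rfl this, ← Nat.cast_prod, prod_range_add_one_eq_factorial]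

private lemma prod_erase_nodes (N l : ℕ) (hl : l < N) :
    ∏ m ∈ (range N).erase l, ((l : ℝ) - m) =
      (-1) ^ (N - 1 - l) * l.factorial * (N - 1 - l).factorial := by
  have hsplit : (range N).erase l = range l ∪ Ico (l + 1) N := by
    ext x; simp [mem_erase, mem_range, mem_union, mem_Ico]; omega
  have hdisj : Disjoint (range l) (Ico (l + 1) N) := by
    rw [disjoint_left]; intro x hx hx'
    simp [mem_range] at hx; simp [mem_Ico] at hx'; omega
  rw [hsplit, prod_union hdisj, prod_lower]
  have h2 : ∏ m ∈ Ico (l + 1) N, ((l : ℝ) - m) =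
      ∏ j ∈ range (N - (l + 1)), ((l : ℝ) - (l + 1 + j : ℕ)) := by
    rw [prod_Ico_eq_prod_range]
  rw [h2]
  have h3 : ∀ j ∈ range (N - (l + 1)), ((l : ℝ) - (l + 1 + j : ℕ)) = (-1) * ((j : ℝ) + 1) := by
    intro j _; push_cast; ring
  rw [prod_congr rfl h3, prod_mul_distrib, prod_const, card_range]
  have h4 : ∏ j ∈ range (N - (l + 1)), ((j : ℝ) + 1) = (N - 1 - l).factorial := by
    have : ∀ j ∈ range (N - (l + 1)), ((j : ℝ) + 1) = ((j + 1 : ℕ) : ℝ) := by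
      intro j _; push_cast; ring
    rw [prod_congr rfl this, ← Nat.cast_prod, prod_range_add_one_eq_factorial,
      show N - (l + 1) = N - 1 - l by omega]
  have h5 : N - (l + 1) = N - 1 - l := by omega
  rw [h4, h5]; ring

private lemma neg_one_pow_sub (a b : ℕ) (h : b ≤ a) :
    (-1 : ℝ) ^ (a - b) = (-1) ^ a * (-1) ^ b := by
  have h1 : (-1 : ℝ) ^ (a - b) * (-1) ^ b = (-1) ^ a := by
    rw [← pow_add, Nat.sub_add_cancel h]
  calc (-1 : ℝ) ^ (a - b) = (-1) ^ (a - b) * ((-1) ^ b * (-1) ^ b) := by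
        rw [← mul_pow]; norm_num
    _ = (-1) ^ (a - b) * (-1) ^ b * (-1) ^ b := by ring
    _ = (-1) ^ a * (-1) ^ b := by rw [h1]

set_option maxHeartbeats 4000000 in
/-- **Inverse of the modified Gram matrix of the biorthogonal Laguerre ensemble.**
With zero-based indices, `g̃ i j = Γ(1+α+N+θ j)/(α+N+θ j - i)` has inverse with
entries `c̃ k l = θ ⬝ 1/(Γ(1+α+θ k) k! (N-1-k)!) ⬝
((α+N-l)/θ)_N/(l!(N-1-l)!) ⬝ (-1)^{N+k+l+1}/(α+N+θ k - l)`. -/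
theorem laguerre_gram_inverse (θ α : ℝ) (hθ : 0 < θ) (hα : -1 < α)
    (N : ℕ) (hN : 1 ≤ N) :
    let G : Matrix (Fin N) (Fin N) ℝ :=
      Matrix.of fun i j =>
        Real.Gamma (1 + α + N + θ * (j : ℝ)) / (α + N + θ * (j : ℝ) - (i : ℝ))
    let C : Matrix (Fin N) (Fin N) ℝ :=
      Matrix.of fun k l =>
        θ * (1 / (Real.Gamma (1 + α + θ * (k : ℝ)) * (Nat.factorial k : ℝ) *
              (Nat.factorial (N - 1 - (k : ℕ)) : ℝ))) *
          ((ascPochhammer ℝ N).eval ((α + N - (l : ℝ)) / θ) /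
            ((Nat.factorial l : ℝ) * (Nat.factorial (N - 1 - (l : ℕ)) : ℝ))) *
          ((-1) ^ (N + (k : ℕ) + (l : ℕ) + 1) / (α + N + θ * (k : ℝ) - (l : ℝ)))
    C * G = 1 ∧ G * C = 1 := by
  intro G C
  have hθ0 : θ ≠ 0 := ne_of_gt hθ
  suffices hCG : C * G = 1 from ⟨hCG, mul_eq_one_comm.mp hCG⟩
  have hG : G = Matrix.of fun i j : Fin N =>
      Real.Gamma (1 + α + N + θ * (j : ℝ)) / (α + N + θ * (j : ℝ) - (i : ℝ)) := rfl
  have hC : C = Matrix.of fun k l : Fin N =>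
      θ * (1 / (Real.Gamma (1 + α + θ * (k : ℝ)) * (Nat.factorial k : ℝ) *
            (Nat.factorial (N - 1 - (k : ℕ)) : ℝ))) *
        ((ascPochhammer ℝ N).eval ((α + N - (l : ℝ)) / θ) /
          ((Nat.factorial l : ℝ) * (Nat.factorial (N - 1 - (l : ℕ)) : ℝ))) *
        ((-1) ^ (N + (k : ℕ) + (l : ℕ) + 1) / (α + N + θ * (k : ℝ) - (l : ℝ))) := rfl
  ext k j
  rw [Matrix.mul_apply, Matrix.one_apply, hG, hC]
  simp only [Matrix.of_apply]
  rw [Fin.sum_univ_eq_sum_range (fun m : ℕ =>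
    θ * (1 / (Real.Gamma (1 + α + θ * ((k:ℕ):ℝ)) * ((k:ℕ).factorial : ℝ) *
          ((N - 1 - (k:ℕ)).factorial : ℝ))) *
      ((ascPochhammer ℝ N).eval ((α + N - (m:ℝ)) / θ) /
        ((m.factorial : ℝ) * ((N - 1 - m).factorial : ℝ))) *
      ((-1) ^ (N + (k:ℕ) + m + 1) / (α + N + θ * ((k:ℕ):ℝ) - (m:ℝ))) *
      (Real.Gamma (1 + α + N + θ * ((j:ℕ):ℝ)) / (α + N + θ * ((j:ℕ):ℝ) - (m:ℝ)))) N]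
  have hk : (k : ℕ) < N := k.isLt
  have hj : (j : ℕ) < N := j.isLt
  have hΓk : 0 < Real.Gamma (1 + α + θ * ((k:ℕ):ℝ)) := by
    apply Real.Gamma_pos_of_pos
    have : (0:ℝ) ≤ θ * ((k:ℕ):ℝ) := by positivity
    linarith
  have hΓNj : 0 < Real.Gamma (1 + α + N + θ * ((j:ℕ):ℝ)) := by
    apply Real.Gamma_pos_of_pos
    have h1 : (0:ℝ) ≤ θ * ((j:ℕ):ℝ) := by positivity
    have h2 : (1:ℝ) ≤ N := by exact_mod_cast hN
    linarith
  have hpos : ∀ m i : ℕ, i < N → 0 < α + N + θ * (m:ℝ) - (i:ℝ) := by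
    intro m i hi
    have h1 : (i:ℝ) + 1 ≤ N := by exact_mod_cast hi
    have h2 : (0:ℝ) ≤ θ * (m:ℝ) := by positivity
    linarith
  set v : ℕ → ℝ := fun m => α + N + θ * (m:ℝ) with hv
  set A : ℝ := (-1:ℝ) ^ (N - 1 - (k:ℕ)) /
    (θ ^ (N - 1) * ((k:ℕ).factorial : ℝ) * ((N - 1 - (k:ℕ)).factorial : ℝ) *
      Real.Gamma (1 + α + θ * ((k:ℕ):ℝ))) with hA
  set p : Polynomial ℝ := Polynomial.C A * Lagrange.nodal ((range N).erase (k:ℕ)) v with hp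
  have hinj : Set.InjOn (fun m : ℕ => (m:ℝ)) (range N) :=
    fun a _ b _ h => Nat.cast_injective h
  have hdeg : p.degree < (range N).card := by
    rw [card_range, hp]
    refine lt_of_le_of_lt ((degree_mul_le _ _).trans (add_le_add degree_C_le le_rfl)) ?_
    rw [zero_add, Lagrange.degree_nodal, card_erase_of_mem (mem_range.mpr hk), card_range]
    exact_mod_cast Nat.sub_lt (by omega) one_pos
  have key : ∀ x : ℝ, (∀ i ∈ range N, x ≠ (i:ℝ)) →
      Polynomial.eval x p = (∏ i ∈ range N, (x - (i:ℝ))) *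
        ∑ l ∈ range N, Lagrange.nodalWeight (range N) (fun m : ℕ => (m:ℝ)) l *
          (x - (l:ℝ))⁻¹ * Polynomial.eval ((l:ℝ)) p := by
    intro x hx
    conv_lhs => rw [Lagrange.eq_interpolate hinj hdeg]
    rw [Lagrange.eval_interpolate_not_at_node _ hx, Lagrange.eval_nodal]
  have hw : ∀ l : ℕ, l < N → Lagrange.nodalWeight (range N) (fun m : ℕ => (m:ℝ)) l =
      ((-1:ℝ) ^ (N - 1 - l) * l.factorial * (N - 1 - l).factorial)⁻¹ := by
    intro l hl
    rw [Lagrange.nodalWeight, prod_inv_distrib, prod_erase_nodes N l hl]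
  have hfull : ∀ l : ℕ, l < N → ∏ m ∈ range N, ((l:ℝ) - v m) =
      (-1:ℝ)^N * θ^N * (ascPochhammer ℝ N).eval ((α + N - (l:ℝ)) / θ) := by
    intro l hl
    rw [asc_eval]
    calc ∏ m ∈ range N, ((l:ℝ) - v m)
        = ∏ m ∈ range N, ((-1) * (θ * ((α + N - (l:ℝ))/θ + (m:ℝ)))) := by
          refine prod_congr rfl fun m _ => ?_
          simp only [hv]
          field_simp
          ring
      _ = (-1:ℝ)^N * θ^N * ∏ m ∈ range N, ((α + N - (l:ℝ))/θ + (m:ℝ)) := by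
          rw [prod_mul_distrib, prod_mul_distrib, prod_const, prod_const, card_range]
          ring
  have hpeval : ∀ l : ℕ, l < N → Polynomial.eval ((l:ℝ)) p =
      A * ((-1:ℝ)^N * θ^N * (ascPochhammer ℝ N).eval ((α + N - (l:ℝ))/θ)) /
        ((l:ℝ) - v (k:ℕ)) := by
    intro l hl
    have hbk : (0:ℝ) < v (k:ℕ) - l := hpos k l hl
    have hne : (l:ℝ) - v (k:ℕ) ≠ 0 := by intro h; rw [sub_eq_zero] at h; rw [h] at hbk; linarith
    have hsplit : ((l:ℝ) - v (k:ℕ)) * ∏ m ∈ (range N).erase (k:ℕ), ((l:ℝ) - v m) =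
        ∏ m ∈ range N, ((l:ℝ) - v m) :=
      mul_prod_erase (range N) (fun m => (l:ℝ) - v m) (mem_range.mpr hk)
    rw [hp, eval_mul, eval_C, Lagrange.eval_nodal, eq_div_iff hne, ← hfull l hl, ← hsplit]
    ring
  have f1 : ((k:ℕ).factorial : ℝ) ≠ 0 := Nat.cast_ne_zero.mpr (Nat.factorial_ne_zero _)
  have f2 : (((N - 1 - (k:ℕ)).factorial : ℕ) : ℝ) ≠ 0 := Nat.cast_ne_zero.mpr (Nat.factorial_ne_zero _)
  have hθP : θ^(N-1) ≠ 0 := pow_ne_zero _ hθ0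
  have hterm : ∀ l ∈ range N,
      θ * (1 / (Real.Gamma (1 + α + θ * ((k:ℕ):ℝ)) * ((k:ℕ).factorial : ℝ) *
            ((N - 1 - (k:ℕ)).factorial : ℝ))) *
        ((ascPochhammer ℝ N).eval ((α + N - (l:ℝ)) / θ) /
          ((l.factorial : ℝ) * ((N - 1 - l).factorial : ℝ))) *
        ((-1) ^ (N + (k:ℕ) + l + 1) / (α + N + θ * ((k:ℕ):ℝ) - (l:ℝ))) *
        (Real.Gamma (1 + α + N + θ * ((j:ℕ):ℝ)) / (α + N + θ * ((j:ℕ):ℝ) - (l:ℝ)))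
      = Real.Gamma (1 + α + N + θ * ((j:ℕ):ℝ)) *
        (Lagrange.nodalWeight (range N) (fun m : ℕ => (m:ℝ)) l *
          ((α + N + θ * ((j:ℕ):ℝ)) - (l:ℝ))⁻¹ * Polynomial.eval ((l:ℝ)) p) := by
    intro l hlr
    have hl : l < N := mem_range.mp hlr
    rw [hw l hl, hpeval l hl]
    have hbk : (0:ℝ) < α + N + θ * ((k:ℕ):ℝ) - l := hpos k l hl
    have hbj : (0:ℝ) < α + N + θ * ((j:ℕ):ℝ) - l := hpos j l hl
    have hvk : (l:ℝ) - v (k:ℕ) = -(α + N + θ * ((k:ℕ):ℝ) - (l:ℝ)) := by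
      simp only [hv]; ring
    rw [hvk]
    have hpw : (-1:ℝ)^(N + (k:ℕ) + l + 1) = (-1)^N * (-1)^(k:ℕ) * (-1)^l * (-1) := by
      rw [pow_add, pow_add, pow_add, pow_one]
    have hNm : (-1:ℝ)^(N-1) = (-1)^N * (-1) := by
      have h := neg_one_pow_sub N 1 hN
      simpa using h
    have hθN : θ^N = θ^(N-1) * θ := by rw [← pow_succ, Nat.sub_add_cancel hN]
    rw [hA, hpw, neg_one_pow_sub (N-1) l (by omega), neg_one_pow_sub (N-1) (k:ℕ) (by omega),
      hNm, hθN]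
    have hbk' : (α + (N:ℝ) + θ * ((k:ℕ):ℝ) - (l:ℝ)) ≠ 0 := hbk.ne'
    have hbj' : (α + (N:ℝ) + θ * ((j:ℕ):ℝ) - (l:ℝ)) ≠ 0 := hbj.ne'
    have hΓk' := hΓk.ne'
    have hΓNj' := hΓNj.ne'
    clear hbk hbj hvk
    generalize (α + (N:ℝ) + θ * ((k:ℕ):ℝ) - (l:ℝ)) = Bk at hbk' ⊢
    generalize (α + (N:ℝ) + θ * ((j:ℕ):ℝ) - (l:ℝ)) = Bj at hbj' ⊢
    generalize (ascPochhammer ℝ N).eval ((α + (N:ℝ) - (l:ℝ)) / θ) = P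
    generalize Real.Gamma (1 + α + θ * ((k:ℕ):ℝ)) = Ck at hΓk' ⊢
    generalize Real.Gamma (1 + α + (N:ℝ) + θ * ((j:ℕ):ℝ)) = Cj at hΓNj' ⊢
    have f3 : ((l.factorial : ℕ) : ℝ) ≠ 0 := Nat.cast_ne_zero.mpr (Nat.factorial_ne_zero _)
    have f4 : (((N - 1 - l).factorial : ℕ) : ℝ) ≠ 0 := Nat.cast_ne_zero.mpr (Nat.factorial_ne_zero _)
    rcases Nat.even_or_odd N with h1 | h1 <;>
      rcases Nat.even_or_odd (k:ℕ) with h2 | h2 <;>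
        rcases Nat.even_or_odd l with h3 | h3 <;>
          simp only [h1.neg_one_pow, h2.neg_one_pow, h3.neg_one_pow] <;>
          field_simp <;> ring
  rw [Finset.sum_congr rfl hterm, ← Finset.mul_sum]
  have hxj : ∀ i ∈ range N, (α + N + θ * ((j:ℕ):ℝ)) ≠ (i:ℝ) := by
    intro i hi h
    have h2 := hpos j i (mem_range.mp hi)
    rw [h] at h2
    simp at h2
  have hprod : (0:ℝ) < ∏ i ∈ range N, ((α + N + θ * ((j:ℕ):ℝ)) - (i:ℝ)) :=
    prod_pos fun i hi => hpos j i (mem_range.mp hi)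
  have hkey := key _ hxj
  have hsum : (∑ l ∈ range N, Lagrange.nodalWeight (range N) (fun m : ℕ => (m:ℝ)) l *
        ((α + N + θ * ((j:ℕ):ℝ)) - (l:ℝ))⁻¹ * Polynomial.eval ((l:ℝ)) p) =
      Polynomial.eval (α + N + θ * ((j:ℕ):ℝ)) p /
        ∏ i ∈ range N, ((α + N + θ * ((j:ℕ):ℝ)) - (i:ℝ)) := by
    rw [eq_div_iff hprod.ne', hkey]; ring
  rw [hsum]
  by_cases hkj : k = j
  · subst hkj
    rw [if_pos rfl]
    have h1 : Polynomial.eval (α + N + θ * ((k:ℕ):ℝ)) p =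
        A * (θ^(N-1) * ((-1:ℝ)^(N-1-(k:ℕ)) * (k:ℕ).factorial * (N-1-(k:ℕ)).factorial)) := by
      rw [hp, eval_mul, eval_C, Lagrange.eval_nodal]
      congr 1
      calc ∏ m ∈ (range N).erase (k:ℕ), ((α + N + θ * ((k:ℕ):ℝ)) - v m)
          = ∏ m ∈ (range N).erase (k:ℕ), (θ * (((k:ℕ):ℝ) - (m:ℝ))) := by
            refine prod_congr rfl fun m _ => ?_
            simp only [hv]; ring
        _ = θ^(N-1) * ∏ m ∈ (range N).erase (k:ℕ), (((k:ℕ):ℝ) - (m:ℝ)) := by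
            rw [prod_mul_distrib, prod_const, card_erase_of_mem (mem_range.mpr hk), card_range]
        _ = θ^(N-1) * ((-1:ℝ)^(N-1-(k:ℕ)) * (k:ℕ).factorial * (N-1-(k:ℕ)).factorial) := by
            rw [prod_erase_nodes N (k:ℕ) hk]
    have hz : (0:ℝ) < 1 + α + θ * ((k:ℕ):ℝ) := by
      have : (0:ℝ) ≤ θ * ((k:ℕ):ℝ) := by positivity
      linarith
    have h2 : ∏ i ∈ range N, ((α + N + θ * ((k:ℕ):ℝ)) - (i:ℝ)) =
        Real.Gamma (1 + α + N + θ * ((k:ℕ):ℝ)) / Real.Gamma (1 + α + θ * ((k:ℕ):ℝ)) := by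
      have hg := gamma_prod _ hz N
      have hre : ∏ i ∈ range N, ((α + N + θ * ((k:ℕ):ℝ)) - (i:ℝ)) =
          ∏ i ∈ range N, ((1 + α + θ * ((k:ℕ):ℝ)) + (i:ℝ)) := by
        rw [← prod_range_reflect]
        refine prod_congr rfl fun i hi => ?_
        have hi' := mem_range.mp hi
        have hc : ((N - 1 - i : ℕ) : ℝ) = (N:ℝ) - 1 - (i:ℝ) := by
          rw [Nat.cast_sub (by omega : i ≤ N - 1), Nat.cast_sub (by omega : 1 ≤ N)]
          norm_num
        rw [hc]; ring
      have he : (1 + α + θ * ((k:ℕ):ℝ)) + (N:ℝ) = 1 + α + N + θ * ((k:ℕ):ℝ) := by ring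
      rw [hre, eq_div_iff hΓk.ne', ← he, hg]; ring
    rw [h1, h2, hA]
    have hΓNk : Real.Gamma (1 + α + N + θ * ((k:ℕ):ℝ)) ≠ 0 := hΓNj.ne'
    rcases Nat.even_or_odd (N - 1 - (k:ℕ)) with h | h <;>
      simp only [h.neg_one_pow] <;> field_simp <;> ring
  · rw [if_neg hkj]
    have hjmem : (j:ℕ) ∈ (range N).erase (k:ℕ) :=
      mem_erase.mpr ⟨fun h => hkj (Fin.ext (by exact_mod_cast h.symm)), mem_range.mpr hj⟩
    have h0 : Polynomial.eval (α + N + θ * ((j:ℕ):ℝ)) p = 0 := by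
      rw [hp, eval_mul, eval_C, Lagrange.eval_nodal]
      have hfac : (α + N + θ * ((j:ℕ):ℝ)) - v (j:ℕ) = 0 := by simp only [hv]; ring
      rw [prod_eq_zero hjmem hfac, mul_zero]
    rw [h0, zero_div, mul_zero]
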